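/- (Proposition 3) Let a, b, c > 0 and consider a connecting cycle for three concentric circles with radii a, b, c: vertices p_1, p_2, p_3 with p_i at distance a, b, c respectively from the origin O, given by angles α_1, α_2, α_3. Suppose all three partial derivatives ∂L/∂α_j of the perimeter vanish (a Fermat triangle), the three vertices are pairwise distinct, and O lies in the interior of the triangle p_1 p_2 p_3. Then the common distance r from O to the three side lines (the inradius of the Fermat triangle) satisfies 2 a b c r³ + (a² b² + b² c² + c² a²) r² − a² b² c² = 0. -/

import Mathlib

/-!
Differentiating the perimeter in the angle of one vertex shows that `O` has the same signed
distance from the two oriented sides through that vertex. Hence `O` has one signed distance `s`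
from all three oriented sides, `s ≠ 0` because `O` is interior, and `O` is then the incenter,
with inradius `r = |s|`. With `x, y, z` the tangent lengths from the vertices to the incircle,
`a² = x² + r²` (and cyclically), and Heron's formula reads `x y z = r² (x + y + z)`. These give
`a b c = r (xy + yz + zx - r²)` and
`a²b² + b²c² + c²a² = (xy + yz + zx - r²)(xy + yz + zx - 3r²)`, and the cubic follows.
-/

open Real

/-- The point with polar radius `ρ` and polar angle `θ` in the Euclidean plane. -/
noncomputable def pt (ρ θ : ℝ) : EuclideanSpace ℝ (Fin 2) :=
  WithLp.toLp 2 ![ρ * Real.cos θ, ρ * Real.sin θ]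

/-- The perimeter of the connecting cycle for three concentric circles of radii `a, b, c`
with vertices at polar angles `α, β, γ`. -/
noncomputable def triPerim (a b c : ℝ) (α β γ : ℝ) : ℝ :=
  dist (pt a α) (pt b β) + dist (pt b β) (pt c γ) + dist (pt c γ) (pt a α)

local notation "ℝ²" => EuclideanSpace ℝ (Fin 2)

section InnerProductSpace

variable {E : Type*} [NormedAddCommGroup E] [InnerProductSpace ℝ E]

lemma two_mul_inner_sub_sub (p q r : E) :
    2 * inner ℝ (p - q) (p - r) = dist p q ^ 2 + dist r p ^ 2 - dist q r ^ 2 := by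
  rw [dist_eq_norm p q, dist_eq_norm' r p, dist_eq_norm' q r,
    show r - q = (p - q) - (p - r) by abel, norm_sub_sq_real (p - q) (p - r)]
  ring

lemma norm_sq_mul_perimeter_eq {p₁ p₂ p₃ : E} (h₁₂ : p₁ ≠ p₂)
    (h : dist p₂ p₃ • p₁ + dist p₃ p₁ • p₂ + dist p₁ p₂ • p₃ = 0) :
    ‖p₁‖ ^ 2 * (dist p₁ p₂ + dist p₂ p₃ + dist p₃ p₁) =
      dist p₁ p₂ * dist p₃ p₁ * (dist p₁ p₂ + dist p₃ p₁ - dist p₂ p₃) := by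
  set d₁ := dist p₁ p₂
  set d₂ := dist p₂ p₃
  set d₃ := dist p₃ p₁
  have hD : 0 < d₁ + d₂ + d₃ := by
    have := dist_pos.2 h₁₂; positivity
  have key : (d₁ + d₂ + d₃) • p₁ = d₃ • (p₁ - p₂) + d₁ • (p₁ - p₃) := by
    linear_combination (norm := module) h
  have hnorm := congrArg (fun x => ‖x‖ ^ 2) key
  simp only [norm_add_sq_real, norm_smul, mul_pow, Real.norm_eq_abs, sq_abs, inner_smul_left,
    inner_smul_right, conj_trivial] at hnorm
  have h₁ : ‖p₁ - p₂‖ = d₁ := (dist_eq_norm _ _).symm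
  have h₃ : ‖p₁ - p₃‖ = d₃ := by rw [← dist_eq_norm, dist_comm]
  have hinner := two_mul_inner_sub_sub p₁ p₂ p₃
  rw [h₁, h₃] at hnorm
  refine mul_left_cancel₀ hD.ne' ?_
  linear_combination hnorm + d₁ * d₃ * hinner

end InnerProductSpace

lemma interior_convexHull_eq_empty_of_subset_ker {E : Type*} [NormedAddCommGroup E]
    [NormedSpace ℝ E] {f : E →ₗ[ℝ] ℝ} (hf : f ≠ 0) {S : Set E} (hS : S ⊆ LinearMap.ker f) :
    interior (convexHull ℝ S) = ∅ := by
  refine Set.eq_empty_iff_forall_notMem.2 fun x hx => hf (LinearMap.ker_eq_top.1 ?_)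
  exact Submodule.eq_top_of_nonempty_interior' _
    ⟨x, interior_mono (convexHull_min hS (LinearMap.ker f).convex) hx⟩

-- `x, y, z` are the tangent lengths of a triangle with inradius `r`; `hxyz` is Heron's formula.
lemma cubic_of_tangent_lengths {a b c r x y z : ℝ} (ha : 0 < a) (hb : 0 < b) (hc : 0 < c)
    (hr : 0 ≤ r) (hxy : 0 < x + y) (hyz : 0 < y + z) (hzx : 0 < z + x)
    (hxyz : x * y * z = r ^ 2 * (x + y + z))
    (hax : a ^ 2 = x ^ 2 + r ^ 2) (hby : b ^ 2 = y ^ 2 + r ^ 2) (hcz : c ^ 2 = z ^ 2 + r ^ 2) :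
    2 * a * b * c * r ^ 3 + (a ^ 2 * b ^ 2 + b ^ 2 * c ^ 2 + c ^ 2 * a ^ 2) * r ^ 2 -
      a ^ 2 * b ^ 2 * c ^ 2 = 0 := by
  have hQ : 0 < x * y + y * z + z * x - r ^ 2 := by
    have h : (x + y + z) * (x * y + y * z + z * x - r ^ 2) = (x + y) * (y + z) * (z + x) := by
      linear_combination hxyz
    exact pos_of_mul_pos_right (by rw [h]; exact mul_pos (mul_pos hxy hyz) hzx) (by linarith)
  have habc : a * b * c = r * (x * y + y * z + z * x - r ^ 2) := by
    refine (sq_eq_sq₀ (by positivity) (by positivity)).1 ?_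
    rw [mul_pow, mul_pow, hax, hby, hcz]
    linear_combination (x * y * z - r ^ 2 * (x + y + z)) * hxyz
  have hsum : a ^ 2 * b ^ 2 + b ^ 2 * c ^ 2 + c ^ 2 * a ^ 2 =
      (x * y + y * z + z * x - r ^ 2) * (x * y + y * z + z * x - 3 * r ^ 2) := by
    rw [hax, hby, hcz]
    linear_combination (-2 * (x + y + z)) * hxyz
  linear_combination (2 * r ^ 3 - a * b * c - r * (x * y + y * z + z * x - r ^ 2)) * habc +
    r ^ 2 * hsum

-- `wedge p q / dist p q` is the signed distance from the origin to the line `pq` oriented from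
-- `p` to `q`.
def wedge : ℝ² →ₗ[ℝ] ℝ² →ₗ[ℝ] ℝ :=
  LinearMap.mk₂ ℝ (fun x y => x 0 * y 1 - x 1 * y 0)
    (fun _ _ _ => by simp only [PiLp.add_apply]; ring)
    (fun _ _ _ => by simp only [PiLp.smul_apply, smul_eq_mul]; ring)
    (fun _ _ _ => by simp only [PiLp.add_apply]; ring)
    (fun _ _ _ => by simp only [PiLp.smul_apply, smul_eq_mul]; ring)

lemma wedge_apply (x y : ℝ²) : wedge x y = x 0 * y 1 - x 1 * y 0 := rfl

lemma wedge_swap (x y : ℝ²) : wedge y x = -wedge x y := by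
  simp only [wedge_apply]; ring

lemma wedge_self (x : ℝ²) : wedge x x = 0 := by
  rw [wedge_apply]; ring

lemma wedge_sub_sub (p q r : ℝ²) :
    wedge (p - q) (p - r) = wedge p q + wedge q r + wedge r p := by
  simp only [wedge_apply, PiLp.sub_apply]; ring

lemma norm_sq_eq_fin_two (x : ℝ²) : ‖x‖ ^ 2 = x 0 ^ 2 + x 1 ^ 2 := by
  simp [EuclideanSpace.norm_sq_eq, Fin.sum_univ_two]

lemma inner_eq_fin_two (x y : ℝ²) : inner ℝ x y = x 0 * y 0 + x 1 * y 1 := by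
  simp [PiLp.inner_apply, Fin.sum_univ_two]; ring

lemma wedge_sq_add_inner_sq (x y : ℝ²) :
    wedge x y ^ 2 + inner ℝ x y ^ 2 = ‖x‖ ^ 2 * ‖y‖ ^ 2 := by
  rw [wedge_apply, inner_eq_fin_two, norm_sq_eq_fin_two, norm_sq_eq_fin_two]; ring

lemma abs_wedge_le (x y : ℝ²) : |wedge x y| ≤ ‖x‖ * ‖y‖ := by
  refine (sq_le_sq₀ (abs_nonneg _) (by positivity)).1 ?_
  rw [sq_abs, mul_pow, ← wedge_sq_add_inner_sq]
  nlinarith [sq_nonneg (inner ℝ x y)]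

lemma eq_zero_of_wedge_eq_zero {x p q : ℝ²} (hp : wedge x p = 0) (hq : wedge x q = 0)
    (hpq : wedge p q ≠ 0) : x = 0 := by
  rw [wedge_apply] at hp hq hpq
  have h0 : x 0 * (p 0 * q 1 - p 1 * q 0) = 0 := by linear_combination p 0 * hq - q 0 * hp
  have h1 : x 1 * (p 0 * q 1 - p 1 * q 0) = 0 := by linear_combination p 1 * hq - q 1 * hp
  ext i
  fin_cases i
  · simpa [hpq] using h0
  · simpa [hpq] using h1

lemma wedge_ne_zero {p : ℝ²} (hp : p ≠ 0) : wedge p ≠ 0 := by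
  intro h
  refine hp (eq_zero_of_wedge_eq_zero (p := EuclideanSpace.single 0 1)
    (q := EuclideanSpace.single 1 1) ?_ ?_ ?_)
  · rw [h, LinearMap.zero_apply]
  · rw [h, LinearMap.zero_apply]
  · simp [wedge_apply]

lemma four_mul_wedge_sq (p₁ p₂ p₃ : ℝ²) :
    4 * wedge (p₁ - p₂) (p₁ - p₃) ^ 2 =
      (dist p₁ p₂ + dist p₂ p₃ + dist p₃ p₁) * (-dist p₁ p₂ + dist p₂ p₃ + dist p₃ p₁) *
        (dist p₁ p₂ - dist p₂ p₃ + dist p₃ p₁) * (dist p₁ p₂ + dist p₂ p₃ - dist p₃ p₁) := by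
  have hlag := wedge_sq_add_inner_sq (p₁ - p₂) (p₁ - p₃)
  have hinner := two_mul_inner_sub_sub p₁ p₂ p₃
  rw [← dist_eq_norm, ← dist_eq_norm, dist_comm p₁ p₃] at hlag
  linear_combination 4 * hlag - (2 * inner ℝ (p₁ - p₂) (p₁ - p₃) + dist p₁ p₂ ^ 2 +
    dist p₃ p₁ ^ 2 - dist p₂ p₃ ^ 2) * hinner

lemma infDist_zero_affineSpan_pair {p q : ℝ²} (h : p ≠ q) :
    Metric.infDist 0 (affineSpan ℝ {p, q} : Set ℝ²) = |wedge p q| / dist p q := by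
  have hd : 0 < ‖q - p‖ := by rw [← dist_eq_norm']; exact dist_pos.2 h
  have hwedge : ∀ t : ℝ, wedge (AffineMap.lineMap p q t) (q - p) = wedge p q := by
    intro t
    simp only [AffineMap.lineMap_apply_module', map_add, map_smul, LinearMap.add_apply,
      LinearMap.smul_apply, wedge_apply, PiLp.sub_apply, smul_eq_mul]
    ring
  rw [dist_eq_norm' p q]
  apply le_antisymm
  · set t₀ := -inner ℝ p (q - p) / ‖q - p‖ ^ 2
    have hinner : inner ℝ (AffineMap.lineMap p q t₀) (q - p) = 0 := by
      rw [AffineMap.lineMap_apply_module', inner_add_left, inner_smul_left,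
        real_inner_self_eq_norm_sq, conj_trivial]
      linarith [div_mul_cancel₀ (-inner ℝ p (q - p)) (pow_ne_zero 2 hd.ne')]
    refine (Metric.infDist_le_dist_of_mem (AffineMap.lineMap_mem_affineSpan_pair t₀ p q)).trans
      (le_of_eq ?_)
    rw [dist_zero_left, eq_div_iff hd.ne', ← sq_eq_sq₀ (by positivity) (abs_nonneg _), sq_abs,
      mul_pow, ← wedge_sq_add_inner_sq, hinner, hwedge]
    ring
  · refine (Metric.le_infDist ⟨p, left_mem_affineSpan_pair ℝ p q⟩).2 fun x hx => ?_
    obtain ⟨t, rfl⟩ := mem_affineSpan_pair_iff_exists_lineMap_eq.1 hx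
    rw [div_le_iff₀ hd, dist_zero_left, ← hwedge t]
    exact abs_wedge_le _ _

lemma ne_zero_of_zero_mem_interior_convexHull {p₁ p₂ p₃ : ℝ²} {s : ℝ} (hp₁ : p₁ ≠ 0)
    (e₁₂ : wedge p₁ p₂ = s * dist p₁ p₂) (e₃₁ : wedge p₃ p₁ = s * dist p₃ p₁)
    (hO : (0 : ℝ²) ∈ interior (convexHull ℝ {p₁, p₂, p₃})) : s ≠ 0 := by
  rintro rfl
  rw [zero_mul] at e₁₂ e₃₁
  refine (interior_convexHull_eq_empty_of_subset_ker (wedge_ne_zero hp₁) ?_).subset hO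
  rintro x (rfl | rfl | rfl)
  · exact wedge_self x
  · exact e₁₂
  · rw [SetLike.mem_coe, LinearMap.mem_ker, ← neg_eq_zero, ← wedge_swap, e₃₁]

-- The incenter has the side lengths as barycentric weights: this says the origin is the incenter.
lemma dist_smul_add_dist_smul_add_dist_smul_eq_zero {p₁ p₂ p₃ : ℝ²} {s : ℝ} (hs : s ≠ 0)
    (h₁₂ : p₁ ≠ p₂)
    (e₁₂ : wedge p₁ p₂ = s * dist p₁ p₂) (e₂₃ : wedge p₂ p₃ = s * dist p₂ p₃)
    (e₃₁ : wedge p₃ p₁ = s * dist p₃ p₁) :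
    dist p₂ p₃ • p₁ + dist p₃ p₁ • p₂ + dist p₁ p₂ • p₃ = 0 := by
  refine eq_zero_of_wedge_eq_zero (p := p₁) (q := p₂) ?_ ?_ ?_
  · simp only [map_add, map_smul, LinearMap.add_apply, LinearMap.smul_apply, smul_eq_mul]
    rw [wedge_self, wedge_swap p₁ p₂, e₁₂, e₃₁]
    ring
  · simp only [map_add, map_smul, LinearMap.add_apply, LinearMap.smul_apply, smul_eq_mul]
    rw [wedge_self, wedge_swap p₂ p₃, e₁₂, e₂₃]
    ring
  · rw [e₁₂]; exact mul_ne_zero hs (dist_ne_zero.2 h₁₂)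

lemma inradius_cubic {p₁ p₂ p₃ : ℝ²} {s : ℝ} (hs : s ≠ 0)
    (h₁₂ : p₁ ≠ p₂) (h₂₃ : p₂ ≠ p₃) (h₃₁ : p₃ ≠ p₁)
    (e₁₂ : wedge p₁ p₂ = s * dist p₁ p₂) (e₂₃ : wedge p₂ p₃ = s * dist p₂ p₃)
    (e₃₁ : wedge p₃ p₁ = s * dist p₃ p₁) :
    2 * ‖p₁‖ * ‖p₂‖ * ‖p₃‖ * |s| ^ 3 +
      (‖p₁‖ ^ 2 * ‖p₂‖ ^ 2 + ‖p₂‖ ^ 2 * ‖p₃‖ ^ 2 + ‖p₃‖ ^ 2 * ‖p₁‖ ^ 2) * |s| ^ 2 -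
      ‖p₁‖ ^ 2 * ‖p₂‖ ^ 2 * ‖p₃‖ ^ 2 = 0 := by
  have hV := dist_smul_add_dist_smul_add_dist_smul_eq_zero hs h₁₂ e₁₂ e₂₃ e₃₁
  have ha := norm_sq_mul_perimeter_eq h₁₂ hV
  have hb := norm_sq_mul_perimeter_eq h₂₃ (p₃ := p₁) (by rw [← hV]; abel)
  have hc := norm_sq_mul_perimeter_eq h₃₁ (p₃ := p₂) (by rw [← hV]; abel)
  have hheron := four_mul_wedge_sq p₁ p₂ p₃
  rw [wedge_sub_sub, e₁₂, e₂₃, e₃₁] at hheron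
  set d₁ := dist p₁ p₂
  set d₂ := dist p₂ p₃
  set d₃ := dist p₃ p₁
  have hd₁ : 0 < d₁ := dist_pos.2 h₁₂
  have hd₂ : 0 < d₂ := dist_pos.2 h₂₃
  have hd₃ : 0 < d₃ := dist_pos.2 h₃₁
  have hD : d₁ + d₂ + d₃ ≠ 0 := by positivity
  have hnorm : ∀ {p q : ℝ²} {d : ℝ}, wedge p q = s * d → 0 < d → 0 < ‖p‖ := by
    intro p q d e hd
    refine norm_pos_iff.2 fun hp => mul_ne_zero hs hd.ne' ?_
    rw [← e, hp, map_zero, LinearMap.zero_apply]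
  have hxyz : (d₁ + d₃ - d₂) / 2 * ((d₁ + d₂ - d₃) / 2) * ((d₂ + d₃ - d₁) / 2) =
      |s| ^ 2 * ((d₁ + d₃ - d₂) / 2 + (d₁ + d₂ - d₃) / 2 + (d₂ + d₃ - d₁) / 2) := by
    refine mul_left_cancel₀ hD ?_
    rw [sq_abs]
    linear_combination -hheron / 8
  refine cubic_of_tangent_lengths (hnorm e₁₂ hd₁) (hnorm e₂₃ hd₂) (hnorm e₃₁ hd₃)
    (abs_nonneg s) (by linarith) (by linarith) (by linarith) hxyz ?_ ?_ ?_
  · refine mul_left_cancel₀ hD ?_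
    linear_combination ha + 2 * hxyz
  · refine mul_left_cancel₀ hD ?_
    linear_combination hb + 2 * hxyz
  · refine mul_left_cancel₀ hD ?_
    linear_combination hc + 2 * hxyz

lemma pt_apply_zero (ρ θ : ℝ) : pt ρ θ 0 = ρ * cos θ := rfl

lemma pt_apply_one (ρ θ : ℝ) : pt ρ θ 1 = ρ * sin θ := rfl

lemma norm_pt (ρ θ : ℝ) : ‖pt ρ θ‖ = |ρ| := by
  rw [← sqrt_sq_eq_abs, ← sqrt_sq (norm_nonneg _), norm_sq_eq_fin_two, pt_apply_zero,
    pt_apply_one]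
  congr 1
  linear_combination ρ ^ 2 * sin_sq_add_cos_sq θ

lemma dist_eq_sqrt_fin_two (x y : ℝ²) : dist x y = √((x 0 - y 0) ^ 2 + (x 1 - y 1) ^ 2) := by
  rw [dist_eq_norm, ← sqrt_sq (norm_nonneg _), norm_sq_eq_fin_two]; rfl

lemma hasDerivAt_dist_pt (ρ θ : ℝ) {q : ℝ²} (h : pt ρ θ ≠ q) :
    HasDerivAt (fun t => dist (pt ρ t) q) (wedge q (pt ρ θ) / dist (pt ρ θ) q) θ := by
  have hsq : HasDerivAt (fun t => (ρ * cos t - q 0) ^ 2 + (ρ * sin t - q 1) ^ 2)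
      (2 * wedge q (pt ρ θ)) θ :=
    ((((hasDerivAt_cos θ).const_mul ρ).sub_const (q 0)).pow 2).add
      ((((hasDerivAt_sin θ).const_mul ρ).sub_const (q 1)).pow 2) |>.congr_deriv (by
        rw [wedge_apply, pt_apply_zero, pt_apply_one]; push_cast; ring)
  have hpos : 0 < (ρ * cos θ - q 0) ^ 2 + (ρ * sin θ - q 1) ^ 2 := by
    rw [← Real.sqrt_pos, ← pt_apply_zero, ← pt_apply_one, ← dist_eq_sqrt_fin_two]
    exact dist_pos.2 h
  convert hsq.sqrt hpos.ne' using 1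
  · exact funext fun t => dist_eq_sqrt_fin_two _ _
  · rw [dist_eq_sqrt_fin_two, pt_apply_zero, pt_apply_one]; field_simp

lemma wedge_div_dist_eq_of_hasDerivAt {q r : ℝ²} {ρ θ C : ℝ} (hq : q ≠ pt ρ θ) (hr : pt ρ θ ≠ r)
    (h : HasDerivAt (fun t => dist q (pt ρ t) + dist (pt ρ t) r + C) 0 θ) :
    wedge q (pt ρ θ) / dist q (pt ρ θ) = wedge (pt ρ θ) r / dist (pt ρ θ) r := by
  have hq' := hasDerivAt_dist_pt ρ θ hq.symm
  simp only [dist_comm _ q] at hq'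
  have hsum := ((hq'.add (hasDerivAt_dist_pt ρ θ hr)).add_const C).unique h
  rw [wedge_swap (pt ρ θ) r, neg_div] at hsum
  linarith

lemma exists_wedge_eq_mul_dist_of_critical {a b c α β γ : ℝ}
    (hcrit₁ : HasDerivAt (fun t => triPerim a b c t β γ) 0 α)
    (hcrit₂ : HasDerivAt (fun t => triPerim a b c α t γ) 0 β)
    (h₁₂ : pt a α ≠ pt b β) (h₂₃ : pt b β ≠ pt c γ) (h₃₁ : pt c γ ≠ pt a α) :
    ∃ s : ℝ, wedge (pt a α) (pt b β) = s * dist (pt a α) (pt b β) ∧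
      wedge (pt b β) (pt c γ) = s * dist (pt b β) (pt c γ) ∧
      wedge (pt c γ) (pt a α) = s * dist (pt c γ) (pt a α) := by
  have e₁ : wedge (pt c γ) (pt a α) / dist (pt c γ) (pt a α) =
      wedge (pt a α) (pt b β) / dist (pt a α) (pt b β) := by
    refine wedge_div_dist_eq_of_hasDerivAt h₃₁ h₁₂ (C := dist (pt b β) (pt c γ)) ?_
    convert hcrit₁ using 2 with t
    unfold triPerim; ring
  have e₂ : wedge (pt a α) (pt b β) / dist (pt a α) (pt b β) =
      wedge (pt b β) (pt c γ) / dist (pt b β) (pt c γ) :=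
    wedge_div_dist_eq_of_hasDerivAt h₁₂ h₂₃ hcrit₂
  refine ⟨wedge (pt a α) (pt b β) / dist (pt a α) (pt b β), ?_, ?_, ?_⟩
  · exact (div_mul_cancel₀ _ (dist_ne_zero.2 h₁₂)).symm
  · rw [e₂, div_mul_cancel₀ _ (dist_ne_zero.2 h₂₃)]
  · rw [← e₁, div_mul_cancel₀ _ (dist_ne_zero.2 h₃₁)]

theorem stmt_14_general (a b c : ℝ) (ha : 0 < a) (hb : 0 < b) (hc : 0 < c) (α β γ : ℝ)
    (hcrit1 : HasDerivAt (fun t => triPerim a b c t β γ) 0 α)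
    (hcrit2 : HasDerivAt (fun t => triPerim a b c α t γ) 0 β)
    (hne12 : pt a α ≠ pt b β) (hne23 : pt b β ≠ pt c γ) (hne31 : pt c γ ≠ pt a α)
    (hO : (0 : EuclideanSpace ℝ (Fin 2)) ∈
      interior (convexHull ℝ {pt a α, pt b β, pt c γ})) :
    ∃ r : ℝ,
      Metric.infDist (0 : EuclideanSpace ℝ (Fin 2))
        (affineSpan ℝ {pt a α, pt b β} : Set (EuclideanSpace ℝ (Fin 2))) = r ∧
      Metric.infDist (0 : EuclideanSpace ℝ (Fin 2))
        (affineSpan ℝ {pt b β, pt c γ} : Set (EuclideanSpace ℝ (Fin 2))) = r ∧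
      Metric.infDist (0 : EuclideanSpace ℝ (Fin 2))
        (affineSpan ℝ {pt c γ, pt a α} : Set (EuclideanSpace ℝ (Fin 2))) = r ∧
      2 * a * b * c * r ^ 3 + (a ^ 2 * b ^ 2 + b ^ 2 * c ^ 2 + c ^ 2 * a ^ 2) * r ^ 2 -
        a ^ 2 * b ^ 2 * c ^ 2 = 0 := by
  obtain ⟨s, e₁₂, e₂₃, e₃₁⟩ :=
    exists_wedge_eq_mul_dist_of_critical hcrit1 hcrit2 hne12 hne23 hne31
  have hp₁ : pt a α ≠ 0 := norm_pos_iff.1 (by rwa [norm_pt, abs_of_pos ha])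
  have hs : s ≠ 0 := ne_zero_of_zero_mem_interior_convexHull hp₁ e₁₂ e₃₁ hO
  have hr : ∀ {p q : ℝ²}, p ≠ q → wedge p q = s * dist p q →
      Metric.infDist 0 (affineSpan ℝ {p, q} : Set ℝ²) = |s| := fun h e => by
    rw [infDist_zero_affineSpan_pair h, e, abs_mul, abs_of_pos (dist_pos.2 h),
      mul_div_cancel_right₀ _ (dist_pos.2 h).ne']
  refine ⟨|s|, hr hne12 e₁₂, hr hne23 e₂₃, hr hne31 e₃₁, ?_⟩
  have h := inradius_cubic hs hne12 hne23 hne31 e₁₂ e₂₃ e₃₁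
  rwa [norm_pt, norm_pt, norm_pt, abs_of_pos ha, abs_of_pos hb, abs_of_pos hc] at h

/-- Proposition 3: for a Fermat triangle (a critical point of the perimeter)
for three concentric circles of radii `a, b, c` whose vertices are pairwise distinct and
whose interior contains the common centre `O`, the common distance `r` from `O` to the
three side lines (the inradius) satisfies
`2abc r³ + (a²b² + b²c² + c²a²) r² − a²b²c² = 0`. -/
theorem stmt_14 (a b c : ℝ) (ha : 0 < a) (hb : 0 < b) (hc : 0 < c) (α β γ : ℝ)
    (hcrit1 : HasDerivAt (fun t => triPerim a b c t β γ) 0 α)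
    (hcrit2 : HasDerivAt (fun t => triPerim a b c α t γ) 0 β)
    (hcrit3 : HasDerivAt (fun t => triPerim a b c α β t) 0 γ)
    (hne12 : pt a α ≠ pt b β) (hne23 : pt b β ≠ pt c γ) (hne31 : pt c γ ≠ pt a α)
    (hO : (0 : EuclideanSpace ℝ (Fin 2)) ∈
      interior (convexHull ℝ {pt a α, pt b β, pt c γ})) :
    ∃ r : ℝ,
      Metric.infDist (0 : EuclideanSpace ℝ (Fin 2))
        (affineSpan ℝ {pt a α, pt b β} : Set (EuclideanSpace ℝ (Fin 2))) = r ∧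
      Metric.infDist (0 : EuclideanSpace ℝ (Fin 2))
        (affineSpan ℝ {pt b β, pt c γ} : Set (EuclideanSpace ℝ (Fin 2))) = r ∧
      Metric.infDist (0 : EuclideanSpace ℝ (Fin 2))
        (affineSpan ℝ {pt c γ, pt a α} : Set (EuclideanSpace ℝ (Fin 2))) = r ∧
      2 * a * b * c * r ^ 3 + (a ^ 2 * b ^ 2 + b ^ 2 * c ^ 2 + c ^ 2 * a ^ 2) * r ^ 2 -
        a ^ 2 * b ^ 2 * c ^ 2 = 0 :=
  stmt_14_general a b c ha hb hc α β γ hcrit1 hcrit2 hne12 hne23 hne31 hO
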